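/- Strong validity of tcv-BA output selection: if the ABA instance outputs a bit s and an honest party returns the value v' from f+1 VALUE messages with v' % 2 = s, where all honest inputs lie in {v, v+1} and any f+1 messages from distinct parties include one from an honest party, then v' ∈ {v, v+1} and v' is the unique element of {v, v+1} with parity s; hence all honest parties output the same value, which was input by an honest party. -/
import Mathlib


/-- Strong validity of tcv-BA output selection: honest inputs lie in
`{v, v+1}`, honest parties only send VALUE messages equal to their input, `s`
is a common bit, and any value attested by `f+1` VALUE messages from distinct
parties (at most `f` faulty) with the right parity is output.  Then every
output lies in `{v, v+1}`, equals the unique element of `{v, v+1}` of parity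
`s`, and all outputs coincide; moreover the output was input by an honest
party. -/
theorem tcvba_strong_validity {α : Type*} [DecidableEq α]
    (f v s : ℕ) (F : Finset α) (hFc : F.card ≤ f)
    (msg input : α → ℕ)
    (hhonest : ∀ p, p ∉ F → msg p = input p ∧ input p ∈ ({v, v + 1} : Set ℕ))
    (v' v'' : ℕ)
    (T : Finset α) (hTc : f + 1 ≤ T.card) (hT : ∀ p ∈ T, msg p = v')
    (hpar : v' % 2 = s)
    (T' : Finset α) (hTc' : f + 1 ≤ T'.card) (hT' : ∀ p ∈ T', msg p = v'')
    (hpar' : v'' % 2 = s) :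
    v' ∈ ({v, v + 1} : Set ℕ) ∧ v' = v'' ∧ (∃ p, p ∉ F ∧ input p = v') := by
  have key : ∀ (S : Finset α) (w : ℕ), f + 1 ≤ S.card → (∀ p ∈ S, msg p = w) →
      ∃ p, p ∉ F ∧ input p = w := by
    intro S w hS hSm
    have h1 : F.card < S.card := lt_of_le_of_lt hFc (Nat.lt_of_lt_of_le (Nat.lt_succ_self f) hS)
    have h2 : ¬ S ⊆ F := fun hsub => absurd (Finset.card_le_card hsub) (not_le.mpr h1)
    obtain ⟨p, hpS, hpF⟩ := Finset.not_subset.mp h2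
    exact ⟨p, hpF, ((hhonest p hpF).1).symm.trans (hSm p hpS)⟩
  obtain ⟨p, hpF, hp⟩ := key T v' hTc hT
  obtain ⟨q, hqF, hq⟩ := key T' v'' hTc' hT'
  have hv' : v' ∈ ({v, v + 1} : Set ℕ) := hp ▸ (hhonest p hpF).2
  have hv'' : v'' ∈ ({v, v + 1} : Set ℕ) := hq ▸ (hhonest q hqF).2
  refine ⟨hv', ?_, ⟨p, hpF, hp⟩⟩
  rcases hv' with h1 | h1 <;> rcases hv'' with h2 | h2 <;> subst h1 <;> subst h2 <;> omega
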